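/- arXiv:2311.04476 — 3 statements merged into one kernel-verified Lean document; each statement's English description precedes it below -/
import Mathlib

section
/- (Estimate (15) on the control magnitude) Let ε > 0, α > 0, p, δ > 0, and let x⁰ = (y⁰ᵀ,z⁰ᵀ)ᵀ be a point with ‖y⁰ − y*(0)‖ ≤ p + δ and ‖F(x⁰)⁻¹‖ ≤ μ. Define U^ε = max_{0 ≤ t ≤ ε} Σ_{k=1}^m |u_k^ε(t, x⁰, y*(0))|, where the controls use the frozen coefficients a(x⁰,y*(0)) = −αF(x⁰)⁻¹(y⁰ − y*(0)). Then U^ε ≤ c₁‖y⁰ − y*(0)‖ + (c₂/√ε)√(‖y⁰ − y*(0)‖) ≤ c_u √(‖y⁰ − y*(0)‖/ε), where c₁ = √(|S₁|)·αμ, c₂ = 2√(2απμ)·(Σ_{(j₁,j₂)∈S₂} κ_{j₁j₂}^{2/3})^{3/4}, and c_u = c₁√(ε(p+δ)) + c₂. -/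
open Real Set

lemma aux_abs_sign_le_one (r : ℝ) : |Real.sign r| ≤ 1 := by
  rcases Real.sign_apply_eq r with h | h | h <;> rw [h] <;> norm_num

lemma aux_abs_cos_add_abs_sin (x : ℝ) : |Real.cos x| + |Real.sin x| ≤ Real.sqrt 2 := by
  have h := Real.sin_sq_add_cos_sq x
  have h2 : (|Real.cos x| + |Real.sin x|) ^ 2 ≤ 2 := by
    nlinarith [sq_abs (Real.cos x), sq_abs (Real.sin x),
      sq_nonneg (|Real.cos x| - |Real.sin x|)]
  calc |Real.cos x| + |Real.sin x| = Real.sqrt ((|Real.cos x| + |Real.sin x|) ^ 2) :=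
        (Real.sqrt_sq (by positivity)).symm
    _ ≤ Real.sqrt 2 := Real.sqrt_le_sqrt h2


noncomputable section

/-- The control formula (5) with frozen coefficients `a₁` (indexed by `S₁`) and `a₂`
(indexed by `S₂`): `u_k^ε(t) = Σ_{i∈S₁} δ_{ki} a_i + (1/√ε) Σ_{(i₁,i₂)∈S₂}
2√(πκ_{i₁i₂}|a_{i₁i₂}|)[δ_{k i₁} cos(2πκ_{i₁i₂}t/ε) + δ_{k i₂} sign(a_{i₁i₂})
sin(2πκ_{i₁i₂}t/ε)]`. -/
def uctrl {m : ℕ} (S₁ : Finset (Fin m)) (S₂ : Finset (Fin m × Fin m))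
    (κ : Fin m × Fin m → ℕ) (a₁ : Fin m → ℝ) (a₂ : Fin m × Fin m → ℝ)
    (ε : ℝ) (k : Fin m) (t : ℝ) : ℝ :=
  (if k ∈ S₁ then a₁ k else 0) +
  (1 / Real.sqrt ε) * ∑ q ∈ S₂,
    2 * Real.sqrt (π * (κ q : ℝ) * |a₂ q|) *
      ((if k = q.1 then (1:ℝ) else 0) * Real.cos (2 * π * (κ q : ℝ) * t / ε) +
       (if k = q.2 then (1:ℝ) else 0) * Real.sign (a₂ q) *
         Real.sin (2 * π * (κ q : ℝ) * t / ε))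

/-- **Estimate (15) on the control magnitude.** If `x⁰` satisfies `‖y⁰ − y*(0)‖ ≤ p + δ`
and `‖F(x⁰)⁻¹‖ ≤ μ`, and `a = −αF(x⁰)⁻¹(y⁰ − y*(0))` (i.e. `F a = −α(y⁰ − y*(0))`), then
`U^ε = max_{0≤t≤ε} Σ_k |u_k^ε(t,x⁰,y*(0))| ≤ c₁‖y⁰ − y*₀‖ + (c₂/√ε)√‖y⁰ − y*₀‖
≤ c_u √(‖y⁰ − y*₀‖/ε)`, where `c₁ = √|S₁| α μ`,
`c₂ = 2√(2απμ)(Σ_{S₂} κ^{2/3})^{3/4}` and `c_u = c₁√(ε(p+δ)) + c₂`. -/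
theorem control_magnitude_estimate {n₁ m : ℕ}
    (S₁ : Finset (Fin m)) (S₂ : Finset (Fin m × Fin m))
    (hcard : S₁.card + S₂.card = n₁)
    (κ : Fin m × Fin m → ℕ) (hκpos : ∀ q ∈ S₂, 0 < κ q) (hκinj : Set.InjOn κ ↑S₂)
    (ε α p δ μ : ℝ) (hε : 0 < ε) (hα : 0 < α) (hp : 0 < p) (hδ : 0 < δ) (hμ : 0 ≤ μ)
    (y0 w : EuclideanSpace ℝ (Fin n₁)) (hy : ‖y0 - w‖ ≤ p + δ)
    (F : Matrix (Fin n₁) ({i // i ∈ S₁} ⊕ {q // q ∈ S₂}) ℝ)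
    (hFbij : Function.Bijective F.mulVec)
    -- `‖F⁻¹‖ ≤ μ` (Euclidean operator norm):
    (hFinv : ∀ c : {i // i ∈ S₁} ⊕ {q // q ∈ S₂} → ℝ,
      Real.sqrt (∑ j, (c j) ^ 2) ≤ μ * Real.sqrt (∑ i, (F.mulVec c i) ^ 2))
    (a : {i // i ∈ S₁} ⊕ {q // q ∈ S₂} → ℝ)
    -- `a = −α F⁻¹ (y⁰ − y*₀)`:
    (ha : F.mulVec a = fun i => -α * (y0 i - w i)) :
    (∀ t ∈ Icc (0:ℝ) ε,
      (∑ k : Fin m, |uctrl S₁ S₂ κ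
          (fun i => if h : i ∈ S₁ then a (Sum.inl ⟨i, h⟩) else 0)
          (fun q => if h : q ∈ S₂ then a (Sum.inr ⟨q, h⟩) else 0) ε k t|) ≤
        (Real.sqrt S₁.card * α * μ) * ‖y0 - w‖ +
          (2 * Real.sqrt (2 * α * π * μ) *
              (∑ q ∈ S₂, (κ q : ℝ) ^ ((2:ℝ)/3)) ^ ((3:ℝ)/4)) / Real.sqrt ε *
            Real.sqrt ‖y0 - w‖) ∧
    (Real.sqrt S₁.card * α * μ) * ‖y0 - w‖ +
        (2 * Real.sqrt (2 * α * π * μ) *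
            (∑ q ∈ S₂, (κ q : ℝ) ^ ((2:ℝ)/3)) ^ ((3:ℝ)/4)) / Real.sqrt ε *
          Real.sqrt ‖y0 - w‖ ≤
      ((Real.sqrt S₁.card * α * μ) * Real.sqrt (ε * (p + δ)) +
          2 * Real.sqrt (2 * α * π * μ) *
            (∑ q ∈ S₂, (κ q : ℝ) ^ ((2:ℝ)/3)) ^ ((3:ℝ)/4)) *
        Real.sqrt (‖y0 - w‖ / ε) := by
  have hN0 : (0:ℝ) ≤ ‖y0 - w‖ := norm_nonneg _
  set N := ‖y0 - w‖ with hNdef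
  set a₁ : Fin m → ℝ := fun i => if h : i ∈ S₁ then a (Sum.inl ⟨i, h⟩) else 0 with ha₁def
  set a₂ : Fin m × Fin m → ℝ := fun q => if h : q ∈ S₂ then a (Sum.inr ⟨q, h⟩) else 0
    with ha₂def
  set T := ∑ q ∈ S₂, (κ q : ℝ) ^ ((2:ℝ)/3) with hTdef
  set A2 := ∑ j, (a j) ^ 2 with hA2def
  have hA2nn : 0 ≤ A2 := Finset.sum_nonneg fun _ _ => sq_nonneg _
  have hT0 : 0 ≤ T := Finset.sum_nonneg fun q _ => by positivity
  -- ‖a‖ ≤ α μ N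
  have hA : Real.sqrt A2 ≤ α * μ * N := by
    have h1 := hFinv a
    rw [ha] at h1
    have h2 : (∑ i, (-α * (y0 i - w i)) ^ 2) = α ^ 2 * ∑ i, (y0 i - w i) ^ 2 := by
      rw [Finset.mul_sum]; exact Finset.sum_congr rfl fun i _ => by ring
    have hNsq : N = Real.sqrt (∑ i, (y0 i - w i) ^ 2) := by
      rw [hNdef, EuclideanSpace.norm_eq]
      congr 1
      refine Finset.sum_congr rfl fun i _ => ?_
      rw [Real.norm_eq_abs, sq_abs]
      norm_num [PiLp.sub_apply]
    calc Real.sqrt A2 ≤ μ * Real.sqrt (∑ i, (-α * (y0 i - w i)) ^ 2) := h1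
      _ = μ * (α * Real.sqrt (∑ i, (y0 i - w i) ^ 2)) := by
          rw [h2, Real.sqrt_mul (sq_nonneg α), Real.sqrt_sq hα.le]
      _ = α * μ * N := by rw [hNsq]; ring
  -- splitting the square sum
  have hsplit : (∑ i ∈ S₁, (a₁ i) ^ 2) + (∑ q ∈ S₂, (a₂ q) ^ 2) = A2 := by
    rw [hA2def, Fintype.sum_sum_type]
    congr 1
    · rw [← Finset.sum_attach S₁ (fun i => (a₁ i) ^ 2), Finset.univ_eq_attach]
      refine Finset.sum_congr rfl fun i _ => ?_
      simp [ha₁def, i.2]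
    · rw [← Finset.sum_attach S₂ (fun q => (a₂ q) ^ 2), Finset.univ_eq_attach]
      refine Finset.sum_congr rfl fun q _ => ?_
      simp [ha₂def, q.2]
  have hsq1 : ∑ i ∈ S₁, (a₁ i) ^ 2 ≤ A2 := by
    nlinarith [Finset.sum_nonneg (fun q (_ : q ∈ S₂) => sq_nonneg (a₂ q))]
  have hsq2 : ∑ q ∈ S₂, (a₂ q) ^ 2 ≤ A2 := by
    nlinarith [Finset.sum_nonneg (fun i (_ : i ∈ S₁) => sq_nonneg (a₁ i))]
  -- term 1
  have hterm1 : (∑ k : Fin m, |if k ∈ S₁ then a₁ k else 0|) ≤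
      Real.sqrt S₁.card * α * μ * N := by
    have h0 : (∑ k : Fin m, |if k ∈ S₁ then a₁ k else 0|) = ∑ k ∈ S₁, |a₁ k| := by
      calc (∑ k : Fin m, |if k ∈ S₁ then a₁ k else 0|) =
            ∑ k : Fin m, (if k ∈ S₁ then |a₁ k| else 0) :=
            Finset.sum_congr rfl fun k _ => by split_ifs <;> simp
        _ = ∑ k ∈ S₁, |a₁ k| := by rw [Finset.sum_ite_mem, Finset.univ_inter]
    have cs : ∑ k ∈ S₁, 1 * |a₁ k| ≤
        Real.sqrt (∑ k ∈ S₁, (1:ℝ) ^ 2) * Real.sqrt (∑ k ∈ S₁, |a₁ k| ^ 2) :=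
      Real.sum_mul_le_sqrt_mul_sqrt _ _ _
    simp only [one_mul, one_pow, sq_abs, Finset.sum_const, nsmul_eq_mul, mul_one] at cs
    rw [h0]
    calc ∑ k ∈ S₁, |a₁ k| ≤ Real.sqrt S₁.card * Real.sqrt (∑ k ∈ S₁, (a₁ k) ^ 2) := cs
      _ ≤ Real.sqrt S₁.card * (α * μ * N) := by
          refine mul_le_mul_of_nonneg_left ?_ (Real.sqrt_nonneg _)
          exact (Real.sqrt_le_sqrt hsq1).trans hA
      _ = Real.sqrt S₁.card * α * μ * N := by ring
  -- Hölder bound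
  have hholder : ∑ q ∈ S₂, Real.sqrt (κ q) * Real.sqrt |a₂ q| ≤
      T ^ ((3:ℝ)/4) * Real.sqrt (α * μ * N) := by
    have H := Real.inner_le_Lp_mul_Lq_of_nonneg (p := 4/3) (q := 4) S₂
      (f := fun q => Real.sqrt (κ q)) (g := fun q => Real.sqrt |a₂ q|)
      (by constructor <;> norm_num) (fun q _ => Real.sqrt_nonneg _)
      (fun q _ => Real.sqrt_nonneg _)
    have e1 : ∀ q : Fin m × Fin m, (Real.sqrt (κ q)) ^ ((4:ℝ)/3) = (κ q : ℝ) ^ ((2:ℝ)/3) := by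
      intro q
      rw [Real.sqrt_eq_rpow, ← Real.rpow_mul (Nat.cast_nonneg _)]; norm_num
    have e2 : ∀ q : Fin m × Fin m, (Real.sqrt |a₂ q|) ^ (4:ℝ) = (a₂ q) ^ 2 := by
      intro q
      rw [Real.sqrt_eq_rpow, ← Real.rpow_mul (abs_nonneg _)]
      norm_num [Real.rpow_two]
    rw [show (1:ℝ)/(4/3) = 3/4 by norm_num, show (1:ℝ)/4 = 1/4 by norm_num] at H
    simp only [e1, e2] at H
    refine H.trans ?_
    refine mul_le_mul_of_nonneg_left ?_ (Real.rpow_nonneg hT0 _)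
    -- (∑ a₂²)^(1/4) ≤ √(αμN)
    have h3 : (∑ q ∈ S₂, (a₂ q) ^ 2) ^ ((1:ℝ)/4) ≤ A2 ^ ((1:ℝ)/4) :=
      Real.rpow_le_rpow (Finset.sum_nonneg fun _ _ => sq_nonneg _) hsq2 (by norm_num)
    refine h3.trans ?_
    have h4 : A2 ≤ (α * μ * N) ^ 2 := by
      have := Real.sq_sqrt hA2nn
      nlinarith [Real.sqrt_nonneg A2]
    calc A2 ^ ((1:ℝ)/4) ≤ ((α * μ * N) ^ 2) ^ ((1:ℝ)/4) :=
          Real.rpow_le_rpow hA2nn h4 (by norm_num)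
      _ = Real.sqrt (α * μ * N) := by
          rw [← Real.rpow_two, ← Real.rpow_mul (by positivity), Real.sqrt_eq_rpow]
          norm_num
  constructor
  · intro t ht
    -- inner sum bound for each q
    have inner_bd : ∀ q ∈ S₂, (∑ k : Fin m, |2 * Real.sqrt (π * (κ q : ℝ) * |a₂ q|) *
        ((if k = q.1 then (1:ℝ) else 0) * Real.cos (2 * π * (κ q : ℝ) * t / ε) +
         (if k = q.2 then (1:ℝ) else 0) * Real.sign (a₂ q) *
           Real.sin (2 * π * (κ q : ℝ) * t / ε))|) ≤
        2 * Real.sqrt 2 * Real.sqrt (π * (κ q : ℝ) * |a₂ q|) := by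
      intro q hq
      set X := Real.sqrt (π * (κ q : ℝ) * |a₂ q|) with hX
      have hX0 : 0 ≤ X := Real.sqrt_nonneg _
      set c := Real.cos (2 * π * (κ q : ℝ) * t / ε)
      set s := Real.sin (2 * π * (κ q : ℝ) * t / ε)
      have step : ∀ k : Fin m,
          |2 * X * ((if k = q.1 then (1:ℝ) else 0) * c +
            (if k = q.2 then (1:ℝ) else 0) * Real.sign (a₂ q) * s)| ≤
          2 * X * ((if k = q.1 then (1:ℝ) else 0) * |c| +
            (if k = q.2 then (1:ℝ) else 0) * |s|) := by
        intro k
        rw [abs_mul, abs_of_nonneg (by positivity : (0:ℝ) ≤ 2 * X)]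
        refine mul_le_mul_of_nonneg_left ?_ (by positivity)
        refine (abs_add_le _ _).trans ?_
        have h1 : |(if k = q.1 then (1:ℝ) else 0) * c| =
            (if k = q.1 then (1:ℝ) else 0) * |c| := by
          split_ifs <;> simp
        have h2 : |(if k = q.2 then (1:ℝ) else 0) * Real.sign (a₂ q) * s| ≤
            (if k = q.2 then (1:ℝ) else 0) * |s| := by
          split_ifs <;> simp [abs_mul]
          exact mul_le_of_le_one_left (abs_nonneg _) (aux_abs_sign_le_one _)
        rw [h1]
        exact add_le_add le_rfl h2
      calc (∑ k : Fin m, |2 * X * ((if k = q.1 then (1:ℝ) else 0) * c +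
            (if k = q.2 then (1:ℝ) else 0) * Real.sign (a₂ q) * s)|) ≤
          ∑ k : Fin m, 2 * X * ((if k = q.1 then (1:ℝ) else 0) * |c| +
            (if k = q.2 then (1:ℝ) else 0) * |s|) := Finset.sum_le_sum fun k _ => step k
        _ = 2 * X * (|c| + |s|) := by
            rw [← Finset.mul_sum, Finset.sum_add_distrib]
            simp [Finset.sum_ite_eq' Finset.univ, ← Finset.sum_mul]
        _ ≤ 2 * X * Real.sqrt 2 := by
            refine mul_le_mul_of_nonneg_left (aux_abs_cos_add_abs_sin _) (by positivity)
        _ = 2 * Real.sqrt 2 * X := by ring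
    -- sqrt split
    have hsqrt_split : ∀ q ∈ S₂, Real.sqrt (π * (κ q : ℝ) * |a₂ q|) =
        Real.sqrt π * (Real.sqrt (κ q) * Real.sqrt |a₂ q|) := by
      intro q _
      rw [Real.sqrt_mul (by positivity), Real.sqrt_mul pi_nonneg]
      ring
    have hterm2 : (∑ q ∈ S₂, 2 * Real.sqrt 2 * Real.sqrt (π * (κ q : ℝ) * |a₂ q|)) ≤
        2 * Real.sqrt (2 * α * π * μ) * T ^ ((3:ℝ)/4) * Real.sqrt N := by
      calc (∑ q ∈ S₂, 2 * Real.sqrt 2 * Real.sqrt (π * (κ q : ℝ) * |a₂ q|)) =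
            2 * Real.sqrt 2 * Real.sqrt π *
              ∑ q ∈ S₂, Real.sqrt (κ q) * Real.sqrt |a₂ q| := by
            rw [Finset.mul_sum]
            exact Finset.sum_congr rfl fun q hq => by rw [hsqrt_split q hq]; ring
        _ ≤ 2 * Real.sqrt 2 * Real.sqrt π * (T ^ ((3:ℝ)/4) * Real.sqrt (α * μ * N)) := by
            refine mul_le_mul_of_nonneg_left hholder (by positivity)
        _ = 2 * Real.sqrt (2 * α * π * μ) * T ^ ((3:ℝ)/4) * Real.sqrt N := by
            have hse : Real.sqrt 2 * Real.sqrt π * Real.sqrt (α * μ * N) =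
                Real.sqrt (2 * α * π * μ) * Real.sqrt N := by
              rw [← Real.sqrt_mul (by norm_num : (0:ℝ) ≤ 2) π,
                ← Real.sqrt_mul (by positivity : (0:ℝ) ≤ 2 * π) (α * μ * N),
                ← Real.sqrt_mul (by positivity : (0:ℝ) ≤ 2 * α * π * μ) N]
              congr 1; ring
            linear_combination 2 * T ^ ((3:ℝ)/4) * hse
    -- assemble
    have expand : ∀ k : Fin m, |uctrl S₁ S₂ κ a₁ a₂ ε k t| ≤
        |if k ∈ S₁ then a₁ k else 0| +
        (1 / Real.sqrt ε) * ∑ q ∈ S₂, |2 * Real.sqrt (π * (κ q : ℝ) * |a₂ q|) *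
          ((if k = q.1 then (1:ℝ) else 0) * Real.cos (2 * π * (κ q : ℝ) * t / ε) +
           (if k = q.2 then (1:ℝ) else 0) * Real.sign (a₂ q) *
             Real.sin (2 * π * (κ q : ℝ) * t / ε))| := by
      intro k
      rw [uctrl]
      refine (abs_add_le _ _).trans ?_
      refine add_le_add le_rfl ?_
      rw [abs_mul, abs_of_nonneg (by positivity : (0:ℝ) ≤ 1 / Real.sqrt ε)]
      exact mul_le_mul_of_nonneg_left (Finset.abs_sum_le_sum_abs _ _) (by positivity)
    calc (∑ k : Fin m, |uctrl S₁ S₂ κ a₁ a₂ ε k t|) ≤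
          ∑ k : Fin m, (|if k ∈ S₁ then a₁ k else 0| +
            (1 / Real.sqrt ε) * ∑ q ∈ S₂, |2 * Real.sqrt (π * (κ q : ℝ) * |a₂ q|) *
              ((if k = q.1 then (1:ℝ) else 0) * Real.cos (2 * π * (κ q : ℝ) * t / ε) +
               (if k = q.2 then (1:ℝ) else 0) * Real.sign (a₂ q) *
                 Real.sin (2 * π * (κ q : ℝ) * t / ε))|) :=
          Finset.sum_le_sum fun k _ => expand k
      _ = (∑ k : Fin m, |if k ∈ S₁ then a₁ k else 0|) +
            (1 / Real.sqrt ε) * ∑ q ∈ S₂, ∑ k : Fin m,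
              |2 * Real.sqrt (π * (κ q : ℝ) * |a₂ q|) *
              ((if k = q.1 then (1:ℝ) else 0) * Real.cos (2 * π * (κ q : ℝ) * t / ε) +
               (if k = q.2 then (1:ℝ) else 0) * Real.sign (a₂ q) *
                 Real.sin (2 * π * (κ q : ℝ) * t / ε))| := by
          rw [Finset.sum_add_distrib, ← Finset.mul_sum, Finset.sum_comm]
      _ ≤ Real.sqrt S₁.card * α * μ * N +
            (1 / Real.sqrt ε) * ∑ q ∈ S₂, 2 * Real.sqrt 2 *
              Real.sqrt (π * (κ q : ℝ) * |a₂ q|) := by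
          refine add_le_add hterm1 (mul_le_mul_of_nonneg_left
            (Finset.sum_le_sum inner_bd) (by positivity))
      _ ≤ Real.sqrt S₁.card * α * μ * N +
            (1 / Real.sqrt ε) * (2 * Real.sqrt (2 * α * π * μ) * T ^ ((3:ℝ)/4) *
              Real.sqrt N) := by
          exact add_le_add le_rfl (mul_le_mul_of_nonneg_left hterm2 (by positivity))
      _ = Real.sqrt S₁.card * α * μ * N +
            2 * Real.sqrt (2 * α * π * μ) * T ^ ((3:ℝ)/4) / Real.sqrt ε *
              Real.sqrt N := by ring
  · -- second inequality
    have hε' : (0:ℝ) < Real.sqrt ε := Real.sqrt_pos.mpr hε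
    have hdiv : Real.sqrt (N / ε) = Real.sqrt N / Real.sqrt ε := Real.sqrt_div hN0 ε
    have hmulε : Real.sqrt (ε * (p + δ)) = Real.sqrt ε * Real.sqrt (p + δ) :=
      Real.sqrt_mul hε.le _
    have hNle : N ≤ Real.sqrt (p + δ) * Real.sqrt N := by
      have h1 : Real.sqrt N ≤ Real.sqrt (p + δ) := Real.sqrt_le_sqrt hy
      calc N = Real.sqrt N * Real.sqrt N := (Real.mul_self_sqrt hN0).symm
        _ ≤ Real.sqrt (p + δ) * Real.sqrt N :=
            mul_le_mul_of_nonneg_right h1 (Real.sqrt_nonneg _)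
    rw [hdiv, hmulε]
    have c1nn : (0:ℝ) ≤ Real.sqrt S₁.card * α * μ := by positivity
    have key : Real.sqrt S₁.card * α * μ * N ≤
        Real.sqrt S₁.card * α * μ * (Real.sqrt (p + δ) * Real.sqrt N) :=
      mul_le_mul_of_nonneg_left hNle c1nn
    calc Real.sqrt S₁.card * α * μ * N +
          2 * Real.sqrt (2 * α * π * μ) * T ^ ((3:ℝ)/4) / Real.sqrt ε * Real.sqrt N ≤
        Real.sqrt S₁.card * α * μ * (Real.sqrt (p + δ) * Real.sqrt N) +
          2 * Real.sqrt (2 * α * π * μ) * T ^ ((3:ℝ)/4) / Real.sqrt ε * Real.sqrt N :=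
          add_le_add key le_rfl
      _ = (Real.sqrt S₁.card * α * μ * (Real.sqrt ε * Real.sqrt (p + δ)) +
            2 * Real.sqrt (2 * α * π * μ) * T ^ ((3:ℝ)/4)) *
          (Real.sqrt N / Real.sqrt ε) := by
          field_simp
end
end

section
/- (Second-order resonance identities) Let ε > 0, let κ be a positive integer, and let b ∈ ℝ. Define v₁(t) = 2√(πκ|b|/ε)·cos(2πκt/ε) and v₂(t) = 2·sign(b)·√(πκ|b|/ε)·sin(2πκt/ε). Then ∫₀^ε v₁(t) dt = 0, ∫₀^ε v₂(t) dt = 0, ∫₀^ε v₂(s)(∫₀^s v₁(r) dr) ds = εb, and ∫₀^ε v₁(s)(∫₀^s v₂(r) dr) ds = −εb. -/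
open Real

/-!
With `ω = 2πκ/ε` the interval `[0, ε]` is exactly `κ` periods of `cos (ω t)` and `sin (ω t)`, so
the first-order integrals vanish. The inner integrals are `sin (ω s) / ω` and
`(1 - cos (ω s)) / ω`, so over a full period the iterated integrals reduce to
`(1/ω) ∫ sin² = ε/(2ω)` and `-(1/ω) ∫ cos² = -ε/(2ω)`, times the product `a₁a₂` of the amplitudes.
The amplitudes `2√(πκ|b|/ε)` and `2 sign(b) √(πκ|b|/ε)` make `a₁a₂ε/(2ω) = εb`.
-/
theorem Real.sign_mul_abs (b : ℝ) : Real.sign b * |b| = b := by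
  rcases lt_trichotomy b 0 with h | rfl | h
  · rw [Real.sign_of_neg h, abs_of_neg h, neg_one_mul, neg_neg]
  · simp
  · rw [Real.sign_of_pos h, abs_of_pos h, one_mul]

section Harmonics

open intervalIntegral

variable {ω : ℝ}

theorem integral_cos_comp_mul_left (hω : ω ≠ 0) (s : ℝ) :
    ∫ t in (0:ℝ)..s, cos (ω * t) = sin (ω * s) / ω := by
  simp [integral_comp_mul_left (fun x => cos x) hω, div_eq_inv_mul]

theorem integral_sin_comp_mul_left (hω : ω ≠ 0) (s : ℝ) :
    ∫ t in (0:ℝ)..s, sin (ω * t) = (1 - cos (ω * s)) / ω := by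
  simp [integral_comp_mul_left (fun x => sin x) hω, div_eq_inv_mul]

theorem integral_sin_sq_comp_mul_left (hω : ω ≠ 0) (s : ℝ) :
    ∫ t in (0:ℝ)..s, sin (ω * t) ^ 2 = (ω * s - sin (ω * s) * cos (ω * s)) / (2 * ω) := by
  simp only [integral_comp_mul_left (fun x => sin x ^ 2) hω, integral_sin_sq, mul_zero, sin_zero,
    cos_zero, mul_one, zero_sub, sub_zero, smul_eq_mul]
  field_simp
  ring

theorem integral_cos_sq_comp_mul_left (hω : ω ≠ 0) (s : ℝ) :
    ∫ t in (0:ℝ)..s, cos (ω * t) ^ 2 = (ω * s + sin (ω * s) * cos (ω * s)) / (2 * ω) := by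
  simp only [integral_comp_mul_left (fun x => cos x ^ 2) hω, integral_cos_sq, mul_zero, cos_zero,
    sin_zero, sub_zero, smul_eq_mul]
  field_simp
  ring

variable {T : ℝ} {n : ℤ}

theorem sin_eq_zero_of_mul_eq_int_mul_two_pi (hT : ω * T = n * (2 * π)) : sin (ω * T) = 0 := by
  rw [hT, sin_periodic.int_mul_eq, sin_zero]

theorem cos_eq_one_of_mul_eq_int_mul_two_pi (hT : ω * T = n * (2 * π)) : cos (ω * T) = 1 := by
  rw [hT, cos_int_mul_two_pi]

theorem integral_cos_comp_mul_left_period (hω : ω ≠ 0) (hT : ω * T = n * (2 * π)) (a : ℝ) :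
    ∫ t in (0:ℝ)..T, a * cos (ω * t) = 0 := by
  rw [integral_const_mul, integral_cos_comp_mul_left hω, sin_eq_zero_of_mul_eq_int_mul_two_pi hT,
    zero_div, mul_zero]

theorem integral_sin_comp_mul_left_period (hω : ω ≠ 0) (hT : ω * T = n * (2 * π)) (a : ℝ) :
    ∫ t in (0:ℝ)..T, a * sin (ω * t) = 0 := by
  rw [integral_const_mul, integral_sin_comp_mul_left hω, cos_eq_one_of_mul_eq_int_mul_two_pi hT,
    sub_self, zero_div, mul_zero]

theorem integral_sin_mul_integral_cos_period (hω : ω ≠ 0) (hT : ω * T = n * (2 * π)) (a c : ℝ) :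
    ∫ s in (0:ℝ)..T, a * sin (ω * s) * ∫ r in (0:ℝ)..s, c * cos (ω * r) = a * c * T / (2 * ω) := by
  have hintegrand : ∀ s, a * sin (ω * s) * ∫ r in (0:ℝ)..s, c * cos (ω * r)
      = a * c / ω * sin (ω * s) ^ 2 := fun s => by
    rw [integral_const_mul, integral_cos_comp_mul_left hω]; ring
  simp_rw [hintegrand]
  rw [integral_const_mul, integral_sin_sq_comp_mul_left hω, sin_eq_zero_of_mul_eq_int_mul_two_pi hT]
  field_simp
  ring

theorem integral_cos_mul_integral_sin_period (hω : ω ≠ 0) (hT : ω * T = n * (2 * π)) (a c : ℝ) :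
    ∫ s in (0:ℝ)..T, a * cos (ω * s) * ∫ r in (0:ℝ)..s, c * sin (ω * r)
      = -(a * c * T / (2 * ω)) := by
  have hintegrand : ∀ s, a * cos (ω * s) * ∫ r in (0:ℝ)..s, c * sin (ω * r)
      = a * c / ω * cos (ω * s) - a * c / ω * cos (ω * s) ^ 2 := fun s => by
    rw [integral_const_mul, integral_sin_comp_mul_left hω]; ring
  simp_rw [hintegrand]
  rw [integral_sub ((by fun_prop : Continuous fun s => a * c / ω * cos (ω * s)).intervalIntegrable _ _)
      ((by fun_prop : Continuous fun s => a * c / ω * cos (ω * s) ^ 2).intervalIntegrable _ _),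
    integral_cos_comp_mul_left_period hω hT,
    integral_const_mul, integral_cos_sq_comp_mul_left hω, sin_eq_zero_of_mul_eq_int_mul_two_pi hT]
  field_simp
  ring

end Harmonics

/-- **Second-order resonance identities.** For `ε > 0`, a positive integer `κ` and `b ∈ ℝ`,
let `v₁(t) = 2√(πκ|b|/ε) cos(2πκt/ε)` and `v₂(t) = 2 sign(b) √(πκ|b|/ε) sin(2πκt/ε)`.
Then `∫₀^ε v₁ = 0`, `∫₀^ε v₂ = 0`, `∫₀^ε v₂(s)(∫₀^s v₁(r) dr) ds = εb` and
`∫₀^ε v₁(s)(∫₀^s v₂(r) dr) ds = −εb`. -/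
theorem resonance_identities (ε : ℝ) (hε : 0 < ε) (κ : ℕ) (hκ : 0 < κ) (b : ℝ)
    (v₁ v₂ : ℝ → ℝ)
    (hv₁ : v₁ = fun t => 2 * Real.sqrt (π * (κ : ℝ) * |b| / ε) *
      Real.cos (2 * π * (κ : ℝ) * t / ε))
    (hv₂ : v₂ = fun t => 2 * Real.sign b * Real.sqrt (π * (κ : ℝ) * |b| / ε) *
      Real.sin (2 * π * (κ : ℝ) * t / ε)) :
    (∫ t in (0:ℝ)..ε, v₁ t = 0) ∧
    (∫ t in (0:ℝ)..ε, v₂ t = 0) ∧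
    (∫ s in (0:ℝ)..ε, v₂ s * ∫ r in (0:ℝ)..s, v₁ r) = ε * b ∧
    (∫ s in (0:ℝ)..ε, v₁ s * ∫ r in (0:ℝ)..s, v₂ r) = -(ε * b) := by
  have hω : 2 * π * κ / ε ≠ 0 := by positivity
  have hT : 2 * π * κ / ε * ε = ((κ : ℤ) : ℝ) * (2 * π) := by field_simp; push_cast; ring
  have harg (t : ℝ) : 2 * π * κ * t / ε = 2 * π * κ / ε * t := by ring
  set A := √(π * κ * |b| / ε) with hA
  have hamp : 2 * Real.sign b * A * (2 * A) * ε / (2 * (2 * π * κ / ε)) = ε * b := by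
    have hA2 : A * A * ε = π * κ * |b| := by
      rw [hA, Real.mul_self_sqrt (by positivity), div_mul_cancel₀ _ hε.ne']
    field_simp
    linear_combination Real.sign b * hA2 + π * κ * Real.sign_mul_abs b
  subst hv₁ hv₂
  simp only [harg]
  refine ⟨integral_cos_comp_mul_left_period hω hT _, integral_sin_comp_mul_left_period hω hT _, ?_, ?_⟩
  · rw [integral_sin_mul_integral_cos_period hω hT, hamp]
  · rw [integral_cos_mul_integral_sin_period hω hT, mul_comm (2 * A), hamp]
end

section
/- (From discrete geometric decay to continuous exponential decay) Let ε > 0, λ > 0 with ελ ≤ 1, let a₀ ≥ 0, c₁ ≥ 0, γ₂ ≥ 0, N ∈ ℕ, and let g : {0,1,…,N} → [0,∞) and f : [0, Nε) → [0,∞) satisfy: g(j) ≤ (1 − ελ)^j a₀ for all j = 0,…,N−1, and f(t) ≤ g(⌊t/ε⌋) + c₁√(ε·g(⌊t/ε⌋)) + εγ₂ for all t ∈ [0, Nε). Then for all t ∈ [0, Nε): f(t) ≤ γ₁(a₀)·e^{−λt/2} + εγ₂, where γ₁(a₀) = e^{ελ/2}√a₀·(c₁√ε + e^{ελ/2}√a₀),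 which is monotonically increasing in a₀. -/
open Real Set

noncomputable section

/-- **From discrete geometric decay to continuous exponential decay.** Let `ε > 0`,
`λ > 0` with `ελ ≤ 1`, `a₀, c₁, γ₂ ≥ 0`, `N ∈ ℕ`, and let `g : {0,…,N} → [0,∞)` and
`f : [0, Nε) → [0,∞)` satisfy `g(j) ≤ (1 − ελ)^j a₀` for `j = 0,…,N−1` and
`f(t) ≤ g(⌊t/ε⌋) + c₁√(ε g(⌊t/ε⌋)) + εγ₂` for `t ∈ [0, Nε)`. Then
`f(t) ≤ γ₁(a₀) e^{−λt/2} + εγ₂` on `[0, Nε)`, where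
`γ₁(a₀) = e^{ελ/2}√a₀ (c₁√ε + e^{ελ/2}√a₀)` is monotonically increasing in `a₀`. -/
theorem discrete_to_continuous_decay (ε lam a₀ c₁ γ₂ : ℝ) (N : ℕ)
    (hε : 0 < ε) (hlam : 0 < lam) (hεlam : ε * lam ≤ 1)
    (ha₀ : 0 ≤ a₀) (hc₁ : 0 ≤ c₁) (hγ₂ : 0 ≤ γ₂)
    (g : ℕ → ℝ) (f : ℝ → ℝ)
    (hg0 : ∀ j ≤ N, 0 ≤ g j)
    (hf0 : ∀ t ∈ Ico (0:ℝ) (N * ε), 0 ≤ f t)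
    (hg : ∀ j < N, g j ≤ (1 - ε * lam) ^ j * a₀)
    (hf : ∀ t ∈ Ico (0:ℝ) (N * ε),
      f t ≤ g ⌊t / ε⌋₊ + c₁ * Real.sqrt (ε * g ⌊t / ε⌋₊) + ε * γ₂) :
    (∀ t ∈ Ico (0:ℝ) (N * ε),
      f t ≤ (Real.exp (ε * lam / 2) * Real.sqrt a₀ *
              (c₁ * Real.sqrt ε + Real.exp (ε * lam / 2) * Real.sqrt a₀)) *
            Real.exp (-lam * t / 2) + ε * γ₂) ∧
    Monotone (fun a : ℝ => Real.exp (ε * lam / 2) * Real.sqrt a *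
      (c₁ * Real.sqrt ε + Real.exp (ε * lam / 2) * Real.sqrt a)) := by
  constructor
  · intro t ht
    obtain ⟨ht0, htN⟩ := ht
    set j := ⌊t / ε⌋₊ with hj
    have hdiv0 : 0 ≤ t / ε := div_nonneg ht0 hε.le
    have hjN : j < N := by
      rw [hj, Nat.floor_lt hdiv0, div_lt_iff₀ hε]
      linarith
    have hgj := hg j hjN
    have hgj0 := hg0 j hjN.le
    have h1 : (0:ℝ) ≤ 1 - ε * lam := by linarith
    have h2 : (1 - ε * lam) ^ j ≤ Real.exp (-(ε * lam)) ^ j := by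
      apply pow_le_pow_left₀ h1
      linarith [Real.add_one_le_exp (-(ε * lam))]
    have h3 : Real.exp (-(ε * lam)) ^ j = Real.exp (-(ε * lam) * j) := by
      rw [← Real.exp_nat_mul]; ring_nf
    have hjt : t ≤ ε * (j + 1) := by
      have h4 : t / ε < (j : ℝ) + 1 := Nat.lt_floor_add_one (t / ε)
      rw [div_lt_iff₀ hε] at h4
      nlinarith
    have h5 : Real.exp (-(ε * lam) * j) ≤ Real.exp (ε * lam - lam * t) := by
      apply Real.exp_le_exp.mpr
      nlinarith
    have hgb : g j ≤ a₀ * Real.exp (ε * lam - lam * t) := by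
      calc g j ≤ (1 - ε * lam) ^ j * a₀ := hgj
        _ ≤ Real.exp (ε * lam - lam * t) * a₀ := by
            apply mul_le_mul_of_nonneg_right _ ha₀
            calc (1 - ε * lam) ^ j ≤ Real.exp (-(ε * lam)) ^ j := h2
              _ = Real.exp (-(ε * lam) * j) := h3
              _ ≤ Real.exp (ε * lam - lam * t) := h5
        _ = a₀ * Real.exp (ε * lam - lam * t) := mul_comm _ _
    have hE2 : Real.exp (ε * lam - lam * t)
        = Real.exp (ε * lam / 2) ^ 2 * Real.exp (-lam * t / 2) ^ 2 := by
      rw [← Real.exp_nat_mul, ← Real.exp_nat_mul, ← Real.exp_add]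
      ring_nf
    have hsq : Real.sqrt (ε * g j)
        ≤ Real.sqrt ε * Real.sqrt a₀ * (Real.exp (ε * lam / 2) * Real.exp (-lam * t / 2)) := by
      have : Real.sqrt (ε * g j) ≤ Real.sqrt (ε * (a₀ * Real.exp (ε * lam - lam * t))) := by
        apply Real.sqrt_le_sqrt
        exact mul_le_mul_of_nonneg_left hgb hε.le
      refine this.trans_eq ?_
      rw [Real.sqrt_mul hε.le, Real.sqrt_mul ha₀, ← Real.exp_half]
      rw [show (ε * lam - lam * t) / 2 = ε * lam / 2 + -lam * t / 2 by ring, Real.exp_add]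
      ring
    have hft := hf t ⟨ht0, htN⟩
    rw [← hj] at hft
    have hA0 : 0 < Real.exp (-lam * t / 2) := Real.exp_pos _
    have hA1 : Real.exp (-lam * t / 2) ≤ 1 := by
      apply Real.exp_le_one_iff.mpr
      nlinarith
    have hE0 : 0 < Real.exp (ε * lam / 2) := Real.exp_pos _
    have hs0 : 0 ≤ Real.sqrt a₀ := Real.sqrt_nonneg _
    have hsa : Real.sqrt a₀ ^ 2 = a₀ := Real.sq_sqrt ha₀
    have hse : 0 ≤ Real.sqrt ε := Real.sqrt_nonneg _
    have hgA : g j ≤ a₀ * (Real.exp (ε * lam / 2) ^ 2 * Real.exp (-lam * t / 2) ^ 2) := by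
      rw [← hE2]; exact hgb
    have fact1 : g j ≤ a₀ * (Real.exp (ε * lam / 2) ^ 2 * Real.exp (-lam * t / 2)) := by
      refine hgA.trans ?_
      apply mul_le_mul_of_nonneg_left _ ha₀
      have h6 : Real.exp (ε * lam / 2) ^ 2 * Real.exp (-lam * t / 2) ^ 2
          = (Real.exp (ε * lam / 2) ^ 2 * Real.exp (-lam * t / 2)) * Real.exp (-lam * t / 2) := by
        ring
      rw [h6]
      calc (Real.exp (ε * lam / 2) ^ 2 * Real.exp (-lam * t / 2)) * Real.exp (-lam * t / 2)
          ≤ (Real.exp (ε * lam / 2) ^ 2 * Real.exp (-lam * t / 2)) * 1 := by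
            apply mul_le_mul_of_nonneg_left hA1
            positivity
        _ = Real.exp (ε * lam / 2) ^ 2 * Real.exp (-lam * t / 2) := mul_one _
    have fact2 := mul_le_mul_of_nonneg_left hsq hc₁
    have key : Real.exp (ε * lam / 2) * Real.sqrt a₀ *
          (c₁ * Real.sqrt ε + Real.exp (ε * lam / 2) * Real.sqrt a₀) *
          Real.exp (-lam * t / 2) + ε * γ₂
        = a₀ * (Real.exp (ε * lam / 2) ^ 2 * Real.exp (-lam * t / 2)) +
          c₁ * (Real.sqrt ε * Real.sqrt a₀ * (Real.exp (ε * lam / 2) * Real.exp (-lam * t / 2))) +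
          ε * γ₂ := by
      linear_combination (Real.exp (ε * lam / 2) ^ 2 * Real.exp (-lam * t / 2)) * hsa
    rw [key]
    linarith
  · intro a b hab
    simp only
    have h := Real.sqrt_le_sqrt hab
    have ha := Real.sqrt_nonneg a
    have hE0 : 0 < Real.exp (ε * lam / 2) := Real.exp_pos _
    have hce : 0 ≤ c₁ * Real.sqrt ε := mul_nonneg hc₁ (Real.sqrt_nonneg _)
    have h2 : Real.sqrt a * Real.sqrt a ≤ Real.sqrt b * Real.sqrt b :=
      mul_self_le_mul_self ha h
    nlinarith [mul_le_mul_of_nonneg_left h (mul_nonneg hE0.le hce),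
      mul_le_mul_of_nonneg_left h2 (mul_nonneg hE0.le hE0.le)]
end
end
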